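/- arXiv:1204.0639 — 2 statements merged into one kernel-verified Lean document; each statement's English description precedes it below -/
import Mathlib

section
/- Let μ be a nonzero Radon measure on ℝ^d \ {0} arising as the vague limit of n·P(a_n^{-1}X ∈ ·) for some random vector X and sequence a_n ↗ ∞. Then μ is homogeneous: there exists α > 0 such that μ(tB) = t^{-α} μ(B) for all Borel sets B bounded away from the origin and all t > 0. -/
/-!
Fix `t > 1`. Along `⌊t n⌋` the normalised tail masses `n P(X ∈ a_{⌊t n⌋} A)` converge to
`t⁻¹ μ(A)`, while the ratios `a_{⌊t n⌋} / a_n` stay in a compact interval `[1, M]` (the tails of `μ`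
vanish at infinity), so along a subsequence they converge to some `β`. Monotonicity in the radius
gives `μ(β A) = t⁻¹ μ(A)` for `A = C ∩ {‖x‖ > r}` with `C` an open cone whose boundary is `μ`-null;
these sets form a π-system generating the Borel sets (for all but countably many `c` the half-space
cones `{c ‖x‖ < x i}` qualify), hence `μ(β B) = t⁻¹ μ(B)` for all Borel `B` bounded away from `0`.
As `μ` is finite and nonzero on some `{‖x‖ > s}`, no scale other than `1` leaves `μ` invariant, so
`β` is a multiplicative, strictly monotone function of `t`, i.e. a power of `t`.
-/

open MeasureTheory Filter Set Topology Pointwise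

lemma StrictMono.eq_mul_of_map_add {φ : ℝ → ℝ} (hφ : StrictMono φ)
    (hadd : ∀ x y, φ (x + y) = φ x + φ y) (x : ℝ) : φ x = φ 1 * x := by
  have hq : ∀ q : ℚ, φ q = q * φ 1 := fun q => by
    simpa using map_ratCast_smul (AddMonoidHom.mk' φ hadd) ℝ ℝ q 1
  have hφ0 : φ 0 = 0 := by simpa using hq 0
  have hγ : 0 < φ 1 := hφ0 ▸ hφ zero_lt_one
  rcases lt_trichotomy (φ x) (φ 1 * x) with hlt | heq | hgt
  · obtain ⟨q, hφq, hqx⟩ := exists_rat_btwn ((div_lt_iff₀ hγ).2 (by linarith : φ x < x * φ 1))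
    have := hφ.monotone hqx.le
    rw [hq q] at this
    linarith [(div_lt_iff₀ hγ).1 hφq]
  · exact heq
  · obtain ⟨q, hxq, hqφ⟩ := exists_rat_btwn ((lt_div_iff₀ hγ).2 (by linarith : x * φ 1 < φ x))
    have := hφ.monotone hxq.le
    rw [hq q] at this
    linarith [(lt_div_iff₀ hγ).1 hqφ]

lemma StrictMonoOn.exists_eq_rpow_of_map_mul {g : ℝ → ℝ} (hg : StrictMonoOn g (Ioi 0))
    (hpos : ∀ x, 0 < x → 0 < g x) (hmul : ∀ x y, 0 < x → 0 < y → g (x * y) = g x * g y) :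
    ∃ γ > (0 : ℝ), ∀ x, 0 < x → g x = x ^ γ := by
  set φ : ℝ → ℝ := fun x => Real.log (g (Real.exp x))
  have hadd : ∀ x y, φ (x + y) = φ x + φ y := fun x y => by
    simp only [φ, Real.exp_add, hmul _ _ (Real.exp_pos x) (Real.exp_pos y)]
    exact Real.log_mul (hpos _ (Real.exp_pos x)).ne' (hpos _ (Real.exp_pos y)).ne'
  have hφ : StrictMono φ := fun x y hxy =>
    Real.log_lt_log (hpos _ (Real.exp_pos x))
      (hg (Real.exp_pos x) (Real.exp_pos y) (Real.exp_lt_exp.2 hxy))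
  have hlin := hφ.eq_mul_of_map_add hadd
  refine ⟨φ 1, ?_, fun x hx => ?_⟩
  · simpa [hlin 0] using hφ zero_lt_one
  · rw [Real.rpow_def_of_pos hx, mul_comm, ← hlin, ← Real.exp_log (hpos x hx)]
    simp only [φ, Real.exp_log hx]

lemma measurable_of_dense_Ioi {α : Type*} {m : MeasurableSpace α} {f : α → ℝ} {S : Set ℝ}
    (hS : Dense S) (hf : ∀ c ∈ S, MeasurableSet (f ⁻¹' Ioi c)) : Measurable f := by
  refine measurable_of_Ioi fun y => ?_
  choose u hu hyu using fun n : ℕ =>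
    hS.exists_between (lt_add_of_pos_right y (Nat.one_div_pos_of_nat (α := ℝ) (n := n)))
  have hunion : f ⁻¹' Ioi y = ⋃ n, f ⁻¹' Ioi (u n) := by
    ext x
    simp only [mem_preimage, mem_Ioi, mem_iUnion]
    refine ⟨fun hx => ?_, fun ⟨n, hn⟩ => (hyu n).1.trans hn⟩
    obtain ⟨n, hn⟩ := exists_nat_one_div_lt (sub_pos.2 hx)
    exact ⟨n, by linarith [(hyu n).2]⟩
  rw [hunion]
  exact .iUnion fun n => hf _ (hu n)

lemma exists_tendsto_subseq_floor_mul_div {a : ℕ → ℝ} (ha : ∀ n, 0 < a n) (ha_mono : Monotone a)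
    {t M : ℝ} (ht : 1 ≤ t) (hM : ∀ᶠ n : ℕ in atTop, a ⌊t * n⌋₊ ≤ M * a n) :
    ∃ β, 1 ≤ β ∧ ∃ ψ : ℕ → ℕ, StrictMono ψ ∧
      Tendsto (fun k => a ⌊t * ψ k⌋₊ / a (ψ k)) atTop (𝓝 β) := by
  have hmem : ∀ᶠ n : ℕ in atTop, a ⌊t * n⌋₊ / a n ∈ Icc 1 M := hM.mono fun n hn =>
    ⟨(one_le_div (ha n)).2 (ha_mono (Nat.le_floor (le_mul_of_one_le_left n.cast_nonneg ht))),
      (div_le_iff₀ (ha n)).2 hn⟩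
  obtain ⟨β, hβ, ψ, hψ, hlim⟩ := isCompact_Icc.tendsto_subseq' hmem.frequently
  exact ⟨β, hβ.1, ψ, hψ, hlim⟩

namespace RegularVariation

open Metric
open scoped ENNReal

section Norm

variable {E : Type*} [NormedAddCommGroup E]

def BoundedAwayFromZero (B : Set E) : Prop := ∃ ε > (0 : ℝ), ∀ x ∈ B, ε ≤ ‖x‖

def coneTail (C : Set E) (r : ℝ) : Set E := C ∩ {x | r < ‖x‖}

lemma mem_coneTail {C : Set E} {r : ℝ} {x : E} : x ∈ coneTail C r ↔ x ∈ C ∧ r < ‖x‖ := Iff.rfl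

lemma BoundedAwayFromZero.exists_subset_coneTail {B : Set E} (hB : BoundedAwayFromZero B) :
    ∃ δ > (0 : ℝ), B ⊆ coneTail univ δ := by
  obtain ⟨ε, hε, hεB⟩ := hB
  exact ⟨ε / 2, by positivity, fun x hx => mem_coneTail.2 ⟨trivial, by linarith [hεB x hx]⟩⟩

lemma boundedAwayFromZero_coneTail (C : Set E) {r : ℝ} (hr : 0 < r) :
    BoundedAwayFromZero (coneTail C r) :=
  ⟨r, hr, fun _ hx => (mem_coneTail.1 hx).2.le⟩

lemma coneTail_anti (C : Set E) : Antitone (coneTail C) :=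
  fun _ _ h _ hx => ⟨hx.1, h.trans_lt hx.2⟩

lemma coneTail_inter_coneTail (C C' : Set E) (r r' : ℝ) :
    coneTail C r ∩ coneTail C' r' = coneTail (C ∩ C') (max r r') := by
  ext x
  simp only [mem_inter_iff, mem_coneTail, max_lt_iff]
  tauto

lemma BoundedAwayFromZero.smul [NormedSpace ℝ E] {B : Set E} (hB : BoundedAwayFromZero B) {β : ℝ}
    (hβ : 0 < β) : BoundedAwayFromZero (β • B) := by
  obtain ⟨ε, hε, hεB⟩ := hB
  refine ⟨β * ε, by positivity, ?_⟩
  rintro _ ⟨x, hx, rfl⟩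
  rw [norm_smul, Real.norm_of_nonneg hβ.le]
  exact mul_le_mul_of_nonneg_left (hεB x hx) hβ.le

end Norm

section Measure

variable {E : Type*} [NormedAddCommGroup E] [MeasurableSpace E]

def IsFiniteAwayFromZero (μ : Measure E) : Prop := ∀ ε : ℝ, 0 < ε → μ {x | ε ≤ ‖x‖} < ⊤

lemma measurableSet_coneTail [OpensMeasurableSpace E] {C : Set E} (hC : MeasurableSet C) (r : ℝ) :
    MeasurableSet (coneTail C r) :=
  hC.inter (measurableSet_lt measurable_const measurable_norm)

lemma IsFiniteAwayFromZero.measure_coneTail_ne_top {μ : Measure E} (hμ : IsFiniteAwayFromZero μ)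
    (C : Set E) {r : ℝ} (hr : 0 < r) : μ (coneTail C r) ≠ ⊤ :=
  ne_top_of_le_ne_top (hμ r hr).ne (measure_mono fun _ hx => (mem_coneTail.1 hx).2.le)

lemma IsFiniteAwayFromZero.tendsto_measure_coneTail_atTop [OpensMeasurableSpace E] {μ : Measure E}
    (hμ : IsFiniteAwayFromZero μ) {C : Set E} (hC : MeasurableSet C) :
    Tendsto (fun r => μ (coneTail C r)) atTop (𝓝 0) := by
  have hempty : ⋂ r : ℝ, coneTail C r = ∅ :=
    eq_empty_of_forall_notMem fun x hx => lt_irrefl _ (mem_coneTail.1 (mem_iInter.1 hx ‖x‖)).2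
  simpa [Function.comp_def, hempty] using tendsto_measure_iInter_atTop
    (fun r => (measurableSet_coneTail hC r).nullMeasurableSet) (coneTail_anti C)
    ⟨1, hμ.measure_coneTail_ne_top C one_pos⟩

def IsNonzeroAwayFromZero (μ : Measure E) : Prop := ∃ r > (0 : ℝ), μ (coneTail univ r) ≠ 0

lemma measure_eq_zero_of_not_isNonzeroAwayFromZero {μ : Measure E}
    (hμ₀ : ¬ IsNonzeroAwayFromZero μ) {B : Set E} (hB : BoundedAwayFromZero B) : μ B = 0 := by
  obtain ⟨δ, hδ, hBδ⟩ := hB.exists_subset_coneTail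
  exact measure_mono_null hBδ (not_not.1 fun h => hμ₀ ⟨δ, hδ, h⟩)

lemma measure_coneTail_eq_iSup (μ : Measure E) (C : Set E) (r : ℝ) :
    μ (coneTail C r) = ⨆ v > r, μ (coneTail C v) := by
  refine le_antisymm ?_ (iSup₂_le fun v hv => measure_mono (coneTail_anti C hv.le))
  have hunion : coneTail C r = ⋃ n : ℕ, coneTail C (r + 1 / (n + 1)) := by
    ext x
    simp only [mem_iUnion, mem_coneTail]
    refine ⟨fun ⟨hxC, hx⟩ => ?_, fun ⟨n, hxC, hx⟩ =>
      ⟨hxC, by linarith [Nat.one_div_pos_of_nat (α := ℝ) (n := n)]⟩⟩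
    obtain ⟨n, hn⟩ := exists_nat_one_div_lt (sub_pos.2 hx)
    exact ⟨n, hxC, by linarith⟩
  have hmono : Monotone fun n : ℕ => coneTail C (r + 1 / (n + 1)) := fun m n hmn =>
    coneTail_anti C (by gcongr)
  rw [hunion, hmono.measure_iUnion]
  exact iSup_le fun n => le_iSup₂_of_le (r + 1 / (n + 1)) (by simp; positivity) le_rfl

end Measure

section Cone

variable {E : Type*} [NormedAddCommGroup E] [NormedSpace ℝ E] [MeasurableSpace E]

structure IsContinuityCone (μ : Measure E) (C : Set E) : Prop where
  isOpen : IsOpen C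
  smul_eq : ∀ u : ℝ, 0 < u → u • C = C
  measure_frontier_inter : ∀ δ : ℝ, 0 < δ → μ (frontier C ∩ {x | δ ≤ ‖x‖}) = 0

def coneTails (μ : Measure E) : Set (Set E) :=
  {B | ∃ C, IsContinuityCone μ C ∧ ∃ r > (0 : ℝ), B = coneTail C r}

namespace IsContinuityCone

variable {μ : Measure E} {C C' : Set E}

lemma measurableSet [OpensMeasurableSpace E] (hC : IsContinuityCone μ C) : MeasurableSet C :=
  hC.isOpen.measurableSet

lemma smul_coneTail (hC : IsContinuityCone μ C) {β : ℝ} (hβ : 0 < β) (r : ℝ) :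
    β • coneTail C r = coneTail C (β * r) := by
  ext x
  rw [mem_smul_set_iff_inv_smul_mem₀ hβ.ne', mem_coneTail, mem_coneTail,
    ← mem_smul_set_iff_inv_smul_mem₀ hβ.ne', hC.smul_eq β hβ, norm_smul,
    Real.norm_of_nonneg (by positivity), inv_mul_eq_div, lt_div_iff₀' hβ]

lemma inter (hC : IsContinuityCone μ C) (hC' : IsContinuityCone μ C') :
    IsContinuityCone μ (C ∩ C') where
  isOpen := hC.isOpen.inter hC'.isOpen
  smul_eq u hu := by rw [smul_set_inter₀ hu.ne', hC.smul_eq u hu, hC'.smul_eq u hu]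
  measure_frontier_inter δ hδ := by
    refine measure_mono_null ?_ (measure_union_null (hC.measure_frontier_inter δ hδ)
      (hC'.measure_frontier_inter δ hδ))
    rintro x ⟨hx, hδx⟩
    rcases frontier_inter_subset C C' hx with h | h
    exacts [Or.inl ⟨h.1, hδx⟩, Or.inr ⟨h.2, hδx⟩]

lemma measure_frontier_coneTail (hC : IsContinuityCone μ C) {r : ℝ} (hr : 0 < r)
    (hsph : μ (sphere 0 r) = 0) : μ (frontier (coneTail C r)) = 0 := by
  refine measure_mono_null ?_ (measure_union_null (hC.measure_frontier_inter r hr) hsph)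
  intro x hx
  rcases frontier_inter_subset C _ hx with ⟨hxC, hxr⟩ | ⟨-, hxr⟩
  · exact Or.inl ⟨hxC, closure_lt_subset_le continuous_const continuous_norm hxr⟩
  · exact Or.inr (mem_sphere_zero_iff_norm.2
      (frontier_lt_subset_eq continuous_const continuous_norm hxr).symm)

end IsContinuityCone

lemma isContinuityCone_univ (μ : Measure E) : IsContinuityCone μ univ where
  isOpen := isOpen_univ
  smul_eq u hu := smul_set_univ₀ hu.ne'
  measure_frontier_inter δ _ := by simp

lemma isContinuityCone_setOf_mul_norm_lt {μ : Measure E} (ℓ : E →L[ℝ] ℝ) (c : ℝ)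
    (hc : ∀ δ : ℝ, 0 < δ → μ ((fun x => ℓ x / ‖x‖) ⁻¹' {c} ∩ {x | δ ≤ ‖x‖}) = 0) :
    IsContinuityCone μ {x | c * ‖x‖ < ℓ x} where
  isOpen := isOpen_lt (continuous_const.mul continuous_norm) ℓ.continuous
  smul_eq u hu := by
    ext x
    rw [mem_smul_set_iff_inv_smul_mem₀ hu.ne', mem_ofPred, mem_ofPred, map_smul, norm_smul,
      Real.norm_of_nonneg (by positivity), smul_eq_mul, mul_left_comm]
    exact mul_lt_mul_iff_right₀ (inv_pos.2 hu)
  measure_frontier_inter δ hδ := by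
    refine measure_mono_null ?_ (hc δ hδ)
    rintro x ⟨hx, hδx⟩
    have hxpos : 0 < ‖x‖ := hδ.trans_le hδx
    have heq := frontier_lt_subset_eq (continuous_const.mul continuous_norm) ℓ.continuous hx
    refine ⟨?_, hδx⟩
    simp only [mem_preimage, mem_singleton_iff]
    rw [div_eq_iff hxpos.ne']
    exact heq.symm

lemma isPiSystem_coneTails (μ : Measure E) : IsPiSystem (coneTails μ) := by
  rintro _ ⟨C, hC, r, hr, rfl⟩ _ ⟨C', hC', r', -, rfl⟩ -
  exact ⟨C ∩ C', hC.inter hC', max r r', lt_max_of_lt_left hr, coneTail_inter_coneTail C C' r r'⟩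

end Cone

section Sphere

variable {E : Type*} [NormedAddCommGroup E] [MeasurableSpace E] [OpensMeasurableSpace E]
  {μ : Measure E}

lemma IsFiniteAwayFromZero.countable_setOf_measure_level_ne_zero (hμ : IsFiniteAwayFromZero μ)
    {φ : E → ℝ} (hφ : Measurable φ) :
    {c | ∃ δ > (0 : ℝ), μ (φ ⁻¹' {c} ∩ {x | δ ≤ ‖x‖}) ≠ 0}.Countable := by
  let S : ℕ → Set E := fun k => {x | 1 / (k + 1 : ℝ) ≤ ‖x‖}
  have hS : ∀ k, MeasurableSet (S k) := fun k => measurableSet_le measurable_const measurable_norm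
  have : ∀ k, IsFiniteMeasure (μ.restrict (S k)) := fun k =>
    isFiniteMeasure_restrict.2 (hμ _ Nat.one_div_pos_of_nat).ne
  refine (countable_iUnion fun k => Measure.countable_meas_level_set_pos
    (μ := μ.restrict (S k)) hφ).mono fun c ⟨δ, hδ, hc⟩ => ?_
  obtain ⟨k, hk⟩ := exists_nat_one_div_lt hδ
  refine mem_iUnion.2 ⟨k, mem_ofPred.2 (pos_iff_ne_zero.2 fun h0 => hc ?_)⟩
  rw [Measure.restrict_apply' (hS k)] at h0
  exact measure_mono_null (inter_subset_inter_right _ fun x hx => hk.le.trans hx) h0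

lemma IsFiniteAwayFromZero.countable_setOf_measure_sphere_ne_zero (hμ : IsFiniteAwayFromZero μ) :
    {r : ℝ | 0 < r ∧ μ (sphere 0 r) ≠ 0}.Countable := by
  refine (hμ.countable_setOf_measure_level_ne_zero measurable_norm).mono ?_
  rintro r ⟨hr, h⟩
  refine ⟨r, hr, ?_⟩
  convert h using 2
  ext x
  simp only [mem_sphere_zero_iff_norm, mem_inter_iff, mem_preimage, mem_singleton_iff, mem_ofPred]
  exact ⟨And.left, fun hx => ⟨hx, hx.ge⟩⟩

lemma IsFiniteAwayFromZero.exists_measure_sphere_eq_zero (hμ : IsFiniteAwayFromZero μ) {a b : ℝ}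
    (ha : 0 ≤ a) (hab : a < b) : ∃ r ∈ Ioo a b, μ (sphere 0 r) = 0 := by
  obtain ⟨r, hr, hrab⟩ :=
    (hμ.countable_setOf_measure_sphere_ne_zero.dense_compl ℝ).exists_between hab
  exact ⟨r, hrab, not_not.1 fun h => hr ⟨ha.trans_lt hrab.1, h⟩⟩

lemma IsFiniteAwayFromZero.measure_coneTail_mul_eq (hμ : IsFiniteAwayFromZero μ) (C : Set E)
    {β : ℝ} (hβ : 0 < β) (τ : ℝ≥0∞)
    (hupper : ∀ r v, 0 < r → μ (sphere 0 r) = 0 → μ (sphere 0 v) = 0 → β * r < v →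
      μ (coneTail C v) ≤ τ * μ (coneTail C r))
    (hlower : ∀ r u, 0 < r → 0 < u → μ (sphere 0 r) = 0 → μ (sphere 0 u) = 0 → u < β * r →
      τ * μ (coneTail C r) ≤ μ (coneTail C u))
    {r : ℝ} (hr : 0 < r) : μ (coneTail C (β * r)) = τ * μ (coneTail C r) := by
  -- `r ↦ μ (coneTail C r)` is right-continuous and the radii with null spheres are dense
  apply le_antisymm
  · rw [measure_coneTail_eq_iSup μ C (β * r)]
    refine iSup₂_le fun v hv => ?_
    obtain ⟨r', ⟨hrr', hr'v⟩, hr'⟩ :=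
      hμ.exists_measure_sphere_eq_zero hr.le ((lt_div_iff₀' hβ).2 hv)
    obtain ⟨v', ⟨hv'1, hv'2⟩, hv'⟩ :=
      hμ.exists_measure_sphere_eq_zero (mul_pos hβ (hr.trans hrr')).le ((lt_div_iff₀' hβ).1 hr'v)
    calc μ (coneTail C v) ≤ μ (coneTail C v') := measure_mono (coneTail_anti C hv'2.le)
      _ ≤ τ * μ (coneTail C r') := hupper r' v' (hr.trans hrr') hr' hv' hv'1
      _ ≤ τ * μ (coneTail C r) := by gcongr; exact coneTail_anti C hrr'.le
  · rw [measure_coneTail_eq_iSup μ C r, ENNReal.mul_iSup]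
    refine iSup_le fun r' => ?_
    rw [ENNReal.mul_iSup]
    refine iSup_le fun hrr' => ?_
    obtain ⟨r'', ⟨hr''1, hr''2⟩, hr''⟩ := hμ.exists_measure_sphere_eq_zero hr.le hrr'
    obtain ⟨u, ⟨hu1, hu2⟩, hu⟩ :=
      hμ.exists_measure_sphere_eq_zero (mul_pos hβ hr).le (mul_lt_mul_of_pos_left hr''1 hβ)
    calc τ * μ (coneTail C r') ≤ τ * μ (coneTail C r'') := by
          gcongr; exact coneTail_anti C hr''2.le
      _ ≤ μ (coneTail C u) := hlower r'' u (hr.trans hr''1) ((mul_pos hβ hr).trans hu1) hr'' hu hu2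
      _ ≤ μ (coneTail C (β * r)) := measure_mono (coneTail_anti C hu1.le)

end Sphere

section Scaling

variable {E : Type*} [NormedAddCommGroup E] [NormedSpace ℝ E] [MeasurableSpace E]
  {μ : Measure E} {β β' ρ : ℝ} {τ τ' : ℝ≥0∞}

def ScalesBy (μ : Measure E) (β : ℝ) (τ : ℝ≥0∞) : Prop :=
  ∀ B : Set E, MeasurableSet B → BoundedAwayFromZero B → μ (β • B) = τ * μ B

lemma scalesBy_one (μ : Measure E) : ScalesBy μ 1 1 := fun B _ _ => by rw [one_smul, one_mul]

variable [BorelSpace E]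

lemma ScalesBy.mul (h : ScalesBy μ β τ) (h' : ScalesBy μ β' τ') (hβ' : 0 < β') :
    ScalesBy μ (β * β') (τ * τ') := fun B hB hBa => by
  rw [mul_smul, h _ (hB.const_smul₀ β') (hBa.smul hβ'), h' B hB hBa, mul_assoc]

lemma ScalesBy.pow (h : ScalesBy μ β τ) (hβ : 0 < β) : ∀ k : ℕ, ScalesBy μ (β ^ k) (τ ^ k)
  | 0 => by simpa using scalesBy_one μ
  | k + 1 => by simpa only [pow_succ] using (h.pow hβ k).mul h hβ

lemma ScalesBy.inv (h : ScalesBy μ β τ) (hβ : 0 < β) (hτ₀ : τ ≠ 0) (hτ : τ ≠ ⊤) :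
    ScalesBy μ β⁻¹ τ⁻¹ := fun B hB hBa => by
  have hinv := h _ (hB.const_smul₀ β⁻¹) (hBa.smul (inv_pos.2 hβ))
  rw [smul_inv_smul₀ hβ.ne'] at hinv
  rw [hinv, ← mul_assoc, ENNReal.inv_mul_cancel hτ₀ hτ, one_mul]

lemma ScalesBy.strictAnti (hμ : IsFiniteAwayFromZero μ) (hμ₀ : IsNonzeroAwayFromZero μ)
    (h : ScalesBy μ β τ) (h' : ScalesBy μ β' τ') (hβ : 0 < β) (hβ' : 0 < β') (hτ : τ < τ') :
    β' < β := by
  obtain ⟨s, hs, hμs⟩ := hμ₀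
  by_contra! hle
  have hA := measurableSet_coneTail (E := E) MeasurableSet.univ s
  have hAa := boundedAwayFromZero_coneTail (univ : Set E) hs
  have hsub : β' • coneTail (univ : Set E) s ⊆ β • coneTail univ s := by
    rw [(isContinuityCone_univ μ).smul_coneTail hβ, (isContinuityCone_univ μ).smul_coneTail hβ']
    exact coneTail_anti univ (mul_le_mul_of_nonneg_right hle hs.le)
  have hle' := measure_mono (μ := μ) hsub
  rw [h' _ hA hAa, h _ hA hAa] at hle'
  exact ((ENNReal.mul_le_mul_iff_left hμs (hμ.measure_coneTail_ne_top univ hs)).1 hle').not_gt hτ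

lemma ScalesBy.eq_one (hμ : IsFiniteAwayFromZero μ) (hμ₀ : IsNonzeroAwayFromZero μ)
    (h : ScalesBy μ ρ 1) (hρ : 0 < ρ) : ρ = 1 := by
  have not_one_lt : ∀ ρ : ℝ, 0 < ρ → ScalesBy μ ρ 1 → ¬ 1 < ρ := by
    intro ρ hρ h h1
    obtain ⟨s, hs, hμs⟩ := hμ₀
    have hconst : ∀ k : ℕ, μ (coneTail univ (ρ ^ k * s)) = μ (coneTail univ s) := fun k => by
      simpa [(isContinuityCone_univ μ).smul_coneTail (pow_pos hρ k)] using
        h.pow hρ k _ (measurableSet_coneTail (E := E) MeasurableSet.univ s)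
          (boundedAwayFromZero_coneTail (univ : Set E) hs)
    have hlim := (hμ.tendsto_measure_coneTail_atTop MeasurableSet.univ).comp
      ((tendsto_pow_atTop_atTop_of_one_lt h1).atTop_mul_const hs)
    simp only [Function.comp_def, hconst] at hlim
    exact hμs (tendsto_nhds_unique tendsto_const_nhds hlim)
  rcases lt_trichotomy ρ 1 with hlt | heq | hgt
  · refine absurd ((one_lt_inv₀ hρ).2 hlt) (not_one_lt ρ⁻¹ (inv_pos.2 hρ) ?_)
    simpa using h.inv hρ one_ne_zero ENNReal.one_ne_top
  · exact heq
  · exact absurd hgt (not_one_lt ρ hρ h)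

lemma ScalesBy.unique (hμ : IsFiniteAwayFromZero μ) (hμ₀ : IsNonzeroAwayFromZero μ)
    (h : ScalesBy μ β τ) (h' : ScalesBy μ β' τ) (hβ : 0 < β) (hβ' : 0 < β') (hτ₀ : τ ≠ 0)
    (hτ : τ ≠ ⊤) : β = β' := by
  have hquot := h.mul (h'.inv hβ' hτ₀ hτ) (inv_pos.2 hβ')
  rw [ENNReal.mul_inv_cancel hτ₀ hτ] at hquot
  exact mul_inv_eq_one₀ hβ'.ne' |>.1 (hquot.eq_one hμ hμ₀ (by positivity))

lemma exists_rpow_scalesBy (hμ : IsFiniteAwayFromZero μ) (hμ₀ : IsNonzeroAwayFromZero μ)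
    (h : ∀ t : ℝ, 1 < t → ∃ β > 0, ScalesBy μ β (ENNReal.ofReal t⁻¹)) :
    ∃ α > (0 : ℝ), ∀ t : ℝ, 0 < t → ScalesBy μ t (ENNReal.ofReal (t ^ (-α))) := by
  have hall : ∀ τ : ℝ, 0 < τ → ∃ β > 0, ScalesBy μ β (ENNReal.ofReal τ) := by
    intro τ hτ
    rcases lt_trichotomy τ 1 with hlt | rfl | hgt
    · simpa using h τ⁻¹ ((one_lt_inv₀ hτ).2 hlt)
    · exact ⟨1, one_pos, by simpa using scalesBy_one μ⟩
    · obtain ⟨β, hβ, hβτ⟩ := h τ hgt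
      refine ⟨β⁻¹, inv_pos.2 hβ, ?_⟩
      have hinv := hβτ.inv hβ (by simpa using hτ) ENNReal.ofReal_ne_top
      rwa [ENNReal.ofReal_inv_of_pos hτ, inv_inv] at hinv
  choose! g hgpos hg using hall
  have hmul : ∀ x y, 0 < x → 0 < y → g (x * y) = g x * g y := fun x y hx hy => by
    have hxy := (hg x hx).mul (hg y hy) (hgpos y hy)
    rw [← ENNReal.ofReal_mul hx.le] at hxy
    exact (hg _ (mul_pos hx hy)).unique hμ hμ₀ hxy (hgpos _ (mul_pos hx hy))
      (mul_pos (hgpos x hx) (hgpos y hy)) (by simpa using mul_pos hx hy) ENNReal.ofReal_ne_top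
  have hanti : StrictAntiOn g (Ioi 0) := fun x hx y hy hxy =>
    (hg x hx).strictAnti hμ hμ₀ (hg y hy) (hgpos x hx) (hgpos y hy)
      ((ENNReal.ofReal_lt_ofReal_iff hy).2 hxy)
  obtain ⟨γ, hγ, hpow⟩ := StrictMonoOn.exists_eq_rpow_of_map_mul (g := fun x => (g x)⁻¹)
    (fun x hx y hy hxy => (inv_lt_inv₀ (hgpos x hx) (hgpos y hy)).2 (hanti hx hy hxy))
    (fun x hx => inv_pos.2 (hgpos x hx)) (fun x y hx hy => by simp only [hmul x y hx hy, mul_inv])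
  refine ⟨γ⁻¹, inv_pos.2 hγ, fun t ht => ?_⟩
  have hτ : 0 < t ^ (-γ⁻¹) := Real.rpow_pos_of_pos ht _
  have hgt : g (t ^ (-γ⁻¹)) = t := by
    have := hpow _ hτ
    rw [← Real.rpow_mul ht.le, neg_mul, inv_mul_cancel₀ hγ.ne', Real.rpow_neg_one, inv_inj] at this
    exact this
  simpa [hgt] using hg _ hτ

end Scaling

section Limit

variable {E : Type*} [NormedAddCommGroup E] {Ω : Type*} [MeasurableSpace Ω]

def tailMass (P : Measure Ω) (X : Ω → E) (C : Set E) (n : ℕ) (s : ℝ) : ℝ :=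
  n * (P (X ⁻¹' coneTail C s)).toReal

lemma tailMass_anti (P : Measure Ω) [IsFiniteMeasure P] (X : Ω → E) (C : Set E) (n : ℕ) :
    Antitone (tailMass P X C n) := fun _ _ hrs =>
  mul_le_mul_of_nonneg_left (ENNReal.toReal_mono (measure_ne_top P _)
    (measure_mono (preimage_mono (coneTail_anti C hrs)))) n.cast_nonneg

variable [NormedSpace ℝ E] [MeasurableSpace E] [BorelSpace E]

def IsRegVarLimit (P : Measure Ω) (X : Ω → E) (a : ℕ → ℝ) (μ : Measure E) : Prop :=
  ∀ B : Set E, MeasurableSet B → BoundedAwayFromZero B → μ (frontier B) = 0 →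
    Tendsto (fun n : ℕ => (n : ℝ) * (P {ω | (a n)⁻¹ • X ω ∈ B}).toReal) atTop (𝓝 (μ B).toReal)

variable {P : Measure Ω} {X : Ω → E} {a : ℕ → ℝ} {μ : Measure E} {C : Set E} {r t : ℝ}

namespace IsRegVarLimit

lemma tendsto_tailMass (h : IsRegVarLimit P X a μ) (ha : ∀ n, 0 < a n)
    (hC : IsContinuityCone μ C) (hr : 0 < r) (hsph : μ (sphere 0 r) = 0) :
    Tendsto (fun n => tailMass P X C n (a n * r)) atTop (𝓝 (μ (coneTail C r)).toReal) := by
  refine (h _ (measurableSet_coneTail hC.measurableSet r) (boundedAwayFromZero_coneTail C hr)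
    (hC.measure_frontier_coneTail hr hsph)).congr fun n => ?_
  rw [tailMass, ← hC.smul_coneTail (ha n)]
  congr 3
  ext ω
  exact (mem_smul_set_iff_inv_smul_mem₀ (ha n).ne' _ _).symm

lemma tendsto_tailMass_floor_mul (h : IsRegVarLimit P X a μ) (ha : ∀ n, 0 < a n)
    (hC : IsContinuityCone μ C) (hr : 0 < r) (hsph : μ (sphere 0 r) = 0) (ht : 0 < t) :
    Tendsto (fun n => tailMass P X C n (a ⌊t * n⌋₊ * r)) atTop
      (𝓝 (t⁻¹ * (μ (coneTail C r)).toReal)) := by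
  have hm := tendsto_nat_floor_mul_atTop t ht
  have hratio : Tendsto (fun n : ℕ => (n : ℝ) / ⌊t * n⌋₊) atTop (𝓝 t⁻¹) := by
    simpa [Function.comp_def, inv_div] using
      ((tendsto_nat_floor_mul_div_atTop ht.le).comp tendsto_natCast_atTop_atTop).inv₀ ht.ne'
  refine (hratio.mul ((h.tendsto_tailMass ha hC hr hsph).comp hm)).congr' ?_
  filter_upwards [hm.eventually_gt_atTop 0] with n hn
  have hm0 : (⌊t * n⌋₊ : ℝ) ≠ 0 := Nat.cast_ne_zero.2 hn.ne'
  simp only [Function.comp_apply, tailMass]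
  rw [div_mul_eq_mul_div, mul_left_comm, mul_div_cancel_left₀ _ hm0]

lemma exists_eventually_floor_mul_le [IsFiniteMeasure P] (h : IsRegVarLimit P X a μ)
    (ha : ∀ n, 0 < a n) (hμ : IsFiniteAwayFromZero μ) (hμ₀ : IsNonzeroAwayFromZero μ)
    (ht : 0 < t) : ∃ M, ∀ᶠ n : ℕ in atTop, a ⌊t * n⌋₊ ≤ M * a n := by
  obtain ⟨s, hs, hμs⟩ := hμ₀
  obtain ⟨s₀, ⟨hs₀, hs₀s⟩, hsph₀⟩ := hμ.exists_measure_sphere_eq_zero le_rfl hs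
  have hH : 0 < (μ (coneTail univ s₀)).toReal := ENNReal.toReal_pos
    (fun h0 => hμs (measure_mono_null (coneTail_anti univ hs₀s.le) h0))
    (hμ.measure_coneTail_ne_top univ hs₀)
  obtain ⟨R, hR⟩ := eventually_atTop.1 ((hμ.tendsto_measure_coneTail_atTop MeasurableSet.univ
    ).eventually_lt_const (ENNReal.ofReal_pos.2 (mul_pos (inv_pos.2 ht) hH)))
  obtain ⟨s₁, ⟨hRs₁, -⟩, hsph₁⟩ :=
    hμ.exists_measure_sphere_eq_zero (le_max_of_le_right hs₀.le) (lt_add_one (max R s₀))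
  have hs₀s₁ : s₀ < s₁ := (le_max_right R s₀).trans_lt hRs₁
  have hlight : (μ (coneTail univ s₁)).toReal < t⁻¹ * (μ (coneTail univ s₀)).toReal :=
    ENNReal.toReal_lt_of_lt_ofReal (hR s₁ ((le_max_left R s₀).trans hRs₁.le))
  -- where `a ⌊t n⌋ > (s₁ / s₀) a n`, the tail beyond `s₀ a ⌊t n⌋` lies in the tail beyond `s₁ a n`
  refine ⟨s₁ / s₀, not_not.1 fun hne => hlight.not_ge ?_⟩
  refine le_of_tendsto_of_tendsto_of_frequently
    (h.tendsto_tailMass_floor_mul ha (isContinuityCone_univ μ) hs₀ hsph₀ ht)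
    (h.tendsto_tailMass ha (isContinuityCone_univ μ) (hs₀.trans hs₀s₁) hsph₁)
    ((not_eventually.1 hne).mono fun n hn => tailMass_anti P X univ n ?_)
  rw [not_le, div_mul_eq_mul_div, div_lt_iff₀ hs₀] at hn
  linarith

lemma measure_coneTail_le_of_mul_lt [IsFiniteMeasure P] (h : IsRegVarLimit P X a μ)
    (ha : ∀ n, 0 < a n) (hμ : IsFiniteAwayFromZero μ) (hC : IsContinuityCone μ C) (ht : 0 < t)
    {ψ : ℕ → ℕ} (hψ : Tendsto ψ atTop atTop) {β : ℝ}
    (hβ : Tendsto (fun k => a ⌊t * ψ k⌋₊ / a (ψ k)) atTop (𝓝 β)) (hβ₀ : 0 < β) {v : ℝ}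
    (hr : 0 < r) (hsr : μ (sphere 0 r) = 0) (hsv : μ (sphere 0 v) = 0) (hrv : β * r < v) :
    μ (coneTail C v) ≤ ENNReal.ofReal t⁻¹ * μ (coneTail C r) := by
  have hv : 0 < v := (mul_pos hβ₀ hr).trans hrv
  have hev : ∀ᶠ k in atTop, a ⌊t * ψ k⌋₊ * r ≤ a (ψ k) * v :=
    (hβ.eventually (gt_mem_nhds ((lt_div_iff₀ hr).2 hrv))).mono fun k hk => by
      rw [div_lt_div_iff₀ (ha _) hr] at hk
      linarith
  have hreal := le_of_tendsto_of_tendsto ((h.tendsto_tailMass ha hC hv hsv).comp hψ)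
    ((h.tendsto_tailMass_floor_mul ha hC hr hsr ht).comp hψ)
    (hev.mono fun k hk => tailMass_anti P X C _ hk)
  rw [← ENNReal.ofReal_toReal (hμ.measure_coneTail_ne_top C hv),
    ← ENNReal.ofReal_toReal (hμ.measure_coneTail_ne_top C hr), ← ENNReal.ofReal_mul (by positivity)]
  exact ENNReal.ofReal_le_ofReal hreal

lemma le_measure_coneTail_of_lt_mul [IsFiniteMeasure P] (h : IsRegVarLimit P X a μ)
    (ha : ∀ n, 0 < a n) (hμ : IsFiniteAwayFromZero μ) (hC : IsContinuityCone μ C) (ht : 0 < t)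
    {ψ : ℕ → ℕ} (hψ : Tendsto ψ atTop atTop) {β : ℝ}
    (hβ : Tendsto (fun k => a ⌊t * ψ k⌋₊ / a (ψ k)) atTop (𝓝 β)) {u : ℝ} (hr : 0 < r)
    (hu : 0 < u) (hsr : μ (sphere 0 r) = 0) (hsu : μ (sphere 0 u) = 0) (hur : u < β * r) :
    ENNReal.ofReal t⁻¹ * μ (coneTail C r) ≤ μ (coneTail C u) := by
  have hev : ∀ᶠ k in atTop, a (ψ k) * u ≤ a ⌊t * ψ k⌋₊ * r :=
    (hβ.eventually (lt_mem_nhds ((div_lt_iff₀ hr).2 hur))).mono fun k hk => by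
      rw [div_lt_div_iff₀ hr (ha _)] at hk
      linarith
  have hreal := le_of_tendsto_of_tendsto ((h.tendsto_tailMass_floor_mul ha hC hr hsr ht).comp hψ)
    ((h.tendsto_tailMass ha hC hu hsu).comp hψ) (hev.mono fun k hk => tailMass_anti P X C _ hk)
  rw [← ENNReal.ofReal_toReal (hμ.measure_coneTail_ne_top C hu),
    ← ENNReal.ofReal_toReal (hμ.measure_coneTail_ne_top C hr), ← ENNReal.ofReal_mul (by positivity)]
  exact ENNReal.ofReal_le_ofReal hreal

end IsRegVarLimit

end Limit

section Generate

variable {E : Type*} [NormedAddCommGroup E] [NormedSpace ℝ E] [MeasurableSpace E] {μ : Measure E}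

open MeasurableSpace

lemma measurableSet_generateFrom_coneTails {C : Set E} (hC : IsContinuityCone μ C)
    (hC₀ : C ⊆ {0}ᶜ) : MeasurableSet[generateFrom (coneTails μ)] C := by
  have hunion : C = ⋃ n : ℕ, coneTail C (1 / (n + 1)) := by
    refine (iUnion_subset fun n => inter_subset_left).antisymm' fun x hx => mem_iUnion.2 ?_
    obtain ⟨n, hn⟩ := exists_nat_one_div_lt (norm_pos_iff.2 (hC₀ hx))
    exact ⟨n, hx, hn⟩
  rw [hunion]
  exact .iUnion fun n => measurableSet_generateFrom ⟨C, hC, _, Nat.one_div_pos_of_nat, rfl⟩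

lemma measurable_norm_generateFrom_coneTails :
    Measurable[generateFrom (coneTails μ)] (fun x : E => ‖x‖) :=
  measurable_of_dense_Ioi (dense_compl_singleton 0) fun c hc => by
    rcases (mem_compl_singleton_iff.1 hc).lt_or_gt with hc | hc
    · convert MeasurableSet.univ
      exact eq_univ_of_forall fun x => hc.trans_le (norm_nonneg x)
    · exact measurableSet_generateFrom
        ⟨univ, isContinuityCone_univ μ, c, hc, by ext; simp [mem_coneTail]⟩

lemma measurableSet_zero_generateFrom_coneTails :
    MeasurableSet[generateFrom (coneTails μ)] ({0} : Set E) := by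
  convert (measurable_norm_generateFrom_coneTails (measurableSet_Ioi (a := (0 : ℝ)))).compl
  ext x
  simp

end Generate

section Pi

variable {ι : Type*} [Fintype ι] {μ : Measure (ι → ℝ)}

open MeasurableSpace

lemma IsFiniteAwayFromZero.measurable_apply_generateFrom_coneTails (hμ : IsFiniteAwayFromZero μ)
    (i : ι) : Measurable[generateFrom (coneTails μ)] (fun x : ι → ℝ => x i) := by
  set φ : (ι → ℝ) → ℝ := fun x => x i / ‖x‖
  have hbad :=
    hμ.countable_setOf_measure_level_ne_zero ((measurable_pi_apply i).div measurable_norm)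
  have hφ : Measurable[generateFrom (coneTails μ)] φ :=
    measurable_of_dense_Ioi (hbad.dense_compl ℝ) fun c hc => by
      have hK := isContinuityCone_setOf_mul_norm_lt (μ := μ) (ContinuousLinearMap.proj i) c
        fun δ hδ => not_not.1 fun h => hc ⟨δ, hδ, h⟩
      -- `x / 0 = 0` puts the origin in the preimage exactly when `c < 0`
      have hpre : φ ⁻¹' Ioi c =
          {x | c * ‖x‖ < x i} ∪ ({0} ∩ {_x | c < 0}) := by
        ext x
        rcases eq_or_ne x 0 with rfl | hx
        · simp [φ]
        · simp [φ, hx, lt_div_iff₀ (norm_pos_iff.2 hx)]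
      rw [hpre]
      refine (measurableSet_generateFrom_coneTails hK fun x hx hx0 => ?_).union
        (measurableSet_zero_generateFrom_coneTails.inter (MeasurableSet.const _))
      rw [mem_singleton_iff.1 hx0] at hx
      simp at hx
  have hprod : (fun x : ι → ℝ => x i) = fun x => φ x * ‖x‖ := funext fun x => by
    rcases eq_or_ne x 0 with rfl | hx
    · simp
    · exact (div_mul_cancel₀ _ (norm_ne_zero_iff.2 hx)).symm
  rw [hprod]
  exact hφ.mul measurable_norm_generateFrom_coneTails

lemma IsFiniteAwayFromZero.generateFrom_coneTails (hμ : IsFiniteAwayFromZero μ) :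
    MeasurableSpace.pi = generateFrom (coneTails μ) := by
  refine le_antisymm (iSup_le fun i => (hμ.measurable_apply_generateFrom_coneTails i).comap_le)
    (generateFrom_le ?_)
  rintro _ ⟨C, hC, r, -, rfl⟩
  exact measurableSet_coneTail hC.measurableSet r

lemma IsFiniteAwayFromZero.scalesBy_of_coneTail (hμ : IsFiniteAwayFromZero μ) {β : ℝ}
    (hβ : 0 < β) {τ : ℝ≥0∞}
    (h : ∀ C, IsContinuityCone μ C → ∀ r : ℝ, 0 < r →
      μ (coneTail C (β * r)) = τ * μ (coneTail C r)) :
    ScalesBy μ β τ := by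
  intro B hB hBa
  obtain ⟨δ, hδ, hBδ⟩ := hBa.exists_subset_coneTail
  set S := coneTail (univ : Set (ι → ℝ)) δ
  have hmap : ∀ A, MeasurableSet A → μ.map (β⁻¹ • ·) A = μ (β • A) := fun A hA => by
    rw [Measure.map_apply (measurable_const_smul β⁻¹) hA, preimage_smul_inv₀ hβ.ne']
  have hagree : ∀ C, IsContinuityCone μ C → ∀ r : ℝ, 0 < r →
      (μ.map (β⁻¹ • ·)).restrict S (coneTail C r) = (τ • μ).restrict S (coneTail C r) := by
    intro C hC r hr
    have hCS := coneTail_inter_coneTail C univ r δ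
    have hC' := hC.inter (isContinuityCone_univ μ)
    rw [Measure.restrict_apply (measurableSet_coneTail hC.measurableSet r),
      Measure.restrict_apply (measurableSet_coneTail hC.measurableSet r), hCS,
      hmap _ (measurableSet_coneTail hC'.measurableSet _), hC'.smul_coneTail hβ,
      h _ hC' _ (lt_max_of_lt_left hr), Measure.smul_apply, smul_eq_mul]
  have : IsFiniteMeasure ((μ.map (β⁻¹ • ·)).restrict S) := by
    refine isFiniteMeasure_restrict.2 ?_
    rw [hmap S (measurableSet_coneTail MeasurableSet.univ δ),
      (isContinuityCone_univ μ).smul_coneTail hβ]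
    exact hμ.measure_coneTail_ne_top univ (mul_pos hβ hδ)
  have hext : (μ.map (β⁻¹ • ·)).restrict S = (τ • μ).restrict S := by
    refine ext_of_generate_finite _ hμ.generateFrom_coneTails (isPiSystem_coneTails μ) ?_ ?_
    · rintro _ ⟨C, hC, r, hr, rfl⟩
      exact hagree C hC r hr
    · have hS := hagree univ (isContinuityCone_univ μ) δ hδ
      rw [Measure.restrict_apply_self, Measure.restrict_apply_self] at hS
      rwa [Measure.restrict_apply_univ, Measure.restrict_apply_univ]
  have hB' := congrArg (· B) hext
  simp only [Measure.restrict_apply hB, inter_eq_left.2 hBδ, hmap B hB, Measure.smul_apply,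
    smul_eq_mul] at hB'
  exact hB'

lemma IsRegVarLimit.exists_scalesBy_inv {Ω : Type*} [MeasurableSpace Ω] {P : Measure Ω}
    [IsFiniteMeasure P] {X : Ω → ι → ℝ} {a : ℕ → ℝ} (h : IsRegVarLimit P X a μ)
    (ha : ∀ n, 0 < a n) (ha_mono : Monotone a) (hμ : IsFiniteAwayFromZero μ)
    (hμ₀ : IsNonzeroAwayFromZero μ) {t : ℝ} (ht : 1 < t) :
    ∃ β > 0, ScalesBy μ β (ENNReal.ofReal t⁻¹) := by
  have ht₀ : 0 < t := zero_lt_one.trans ht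
  obtain ⟨M, hM⟩ := h.exists_eventually_floor_mul_le ha hμ hμ₀ ht₀
  obtain ⟨β, hβ₁, ψ, hψ, hβ⟩ := exists_tendsto_subseq_floor_mul_div ha ha_mono ht.le hM
  have hβ₀ : 0 < β := zero_lt_one.trans_le hβ₁
  refine ⟨β, hβ₀, hμ.scalesBy_of_coneTail hβ₀ fun C hC r hr => ?_⟩
  exact hμ.measure_coneTail_mul_eq C hβ₀ _
    (fun r v hr hsr hsv hrv =>
      h.measure_coneTail_le_of_mul_lt ha hμ hC ht₀ hψ.tendsto_atTop hβ hβ₀ hr hsr hsv hrv)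
    (fun r u hr hu hsr hsu hur =>
      h.le_measure_coneTail_of_lt_mul ha hμ hC ht₀ hψ.tendsto_atTop hβ hr hu hsr hsu hur) hr

end Pi

end RegularVariation

open RegularVariation

theorem regvar_limit_measure_homogeneous_general
    {d : ℕ} {Ω : Type*} [MeasurableSpace Ω] (P : Measure Ω) [IsProbabilityMeasure P]
    (X : Ω → (Fin d → ℝ))
    (a : ℕ → ℝ) (ha_pos : ∀ n, 0 < a n) (ha_mono : Monotone a)
    (μ : Measure (Fin d → ℝ))
    (hμ_radon : ∀ ε : ℝ, 0 < ε → μ {x | ε ≤ ‖x‖} < ⊤)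
    (hconv : ∀ B : Set (Fin d → ℝ), MeasurableSet B →
      (∃ ε > (0:ℝ), ∀ x ∈ B, ε ≤ ‖x‖) → μ (frontier B) = 0 →
      Tendsto (fun n : ℕ => (n : ℝ) * (P {ω | (a n)⁻¹ • X ω ∈ B}).toReal)
        atTop (𝓝 (μ B).toReal)) :
    ∃ α : ℝ, 0 < α ∧ ∀ B : Set (Fin d → ℝ), MeasurableSet B →
      (∃ ε > (0:ℝ), ∀ x ∈ B, ε ≤ ‖x‖) →
      ∀ t : ℝ, 0 < t → μ (t • B) = ENNReal.ofReal (t ^ (-α)) * μ B := by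
  by_cases hμ₀ : IsNonzeroAwayFromZero μ
  · obtain ⟨α, hα, hscale⟩ := exists_rpow_scalesBy hμ_radon hμ₀ fun t ht =>
      IsRegVarLimit.exists_scalesBy_inv hconv ha_pos ha_mono hμ_radon hμ₀ ht
    exact ⟨α, hα, fun B hB hBa t ht => hscale t ht B hB hBa⟩
  · refine ⟨1, one_pos, fun B hB hBa t ht => ?_⟩
    rw [measure_eq_zero_of_not_isNonzeroAwayFromZero hμ₀ hBa,
      measure_eq_zero_of_not_isNonzeroAwayFromZero hμ₀ (BoundedAwayFromZero.smul hBa ht), mul_zero]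

/-- A nonzero Radon measure `μ` on `ℝ^d \ {0}` arising as the vague limit of
`n · P(aₙ⁻¹ X ∈ ·)` is homogeneous: there is `α > 0` with `μ(tB) = t^{-α} μ(B)` for all
Borel sets `B` bounded away from the origin and all `t > 0`. -/
theorem regvar_limit_measure_homogeneous
    {d : ℕ} {Ω : Type*} [MeasurableSpace Ω] (P : Measure Ω) [IsProbabilityMeasure P]
    (X : Ω → (Fin d → ℝ)) (hX : Measurable X)
    (a : ℕ → ℝ) (ha_pos : ∀ n, 0 < a n) (ha_mono : Monotone a)
    (ha_top : Tendsto a atTop atTop)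
    (μ : Measure (Fin d → ℝ)) (hμ_ne : μ ≠ 0)
    (hμ_radon : ∀ ε : ℝ, 0 < ε → μ {x | ε ≤ ‖x‖} < ⊤)
    (hconv : ∀ B : Set (Fin d → ℝ), MeasurableSet B →
      (∃ ε > (0:ℝ), ∀ x ∈ B, ε ≤ ‖x‖) → μ (frontier B) = 0 →
      Tendsto (fun n : ℕ => (n : ℝ) * (P {ω | (a n)⁻¹ • X ω ∈ B}).toReal)
        atTop (𝓝 (μ B).toReal)) :
    ∃ α : ℝ, 0 < α ∧ ∀ B : Set (Fin d → ℝ), MeasurableSet B →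
      (∃ ε > (0:ℝ), ∀ x ∈ B, ε ≤ ‖x‖) →
      ∀ t : ℝ, 0 < t → μ (t • B) = ENNReal.ofReal (t ^ (-α)) * μ B :=
  regvar_limit_measure_homogeneous_general P X a ha_pos ha_mono μ hμ_radon hconv
end

section
/- Let π be a probability measure on a set M of d×d matrices, and suppose there are measurable κ : M → [1,∞) and ρ : M → (0,∞) with ‖e^{As}‖ ≤ κ(A)e^{−ρ(A)s} for all s ≥ 0, π-almost surely. Fix α > 0 and assume ∫_M κ(A)^α/ρ(A) π(dA) < ∞ and ∫_M κ(A)^α π(dA) < ∞. Define f_δ(A,s) = sup{‖e^{A(t₂−s)}𝟙_{[0,∞)}(t₂−s) − e^{A(t₁−s)}𝟙_{[0,∞)}(t₁−s)‖ : 0 ≤ t₁ ≤ t₂ ≤ 1, t₂−t₁ ≤ δ, s ∉ (t₁,t₂]}. Then ∫_M ∫_ℝ f_δ(A,s)^α ds π(dA) < ∞ for every δ ∈ (0,1). -/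
open MeasureTheory Filter Set Topology

/-- The supOU kernel `f(A,u) = e^{Au} 𝟙_{[0,∞)}(u)` built from the operator exponential. -/
noncomputable def supOUKernel {d : ℕ}
    (A : EuclideanSpace ℝ (Fin d) →L[ℝ] EuclideanSpace ℝ (Fin d)) (u : ℝ) :
    EuclideanSpace ℝ (Fin d) →L[ℝ] EuclideanSpace ℝ (Fin d) :=
  if 0 ≤ u then NormedSpace.exp (u • A) else 0

/-- The oscillation function
`f_δ(A,s) = sup{‖f(A,t₂−s) − f(A,t₁−s)‖ : 0 ≤ t₁ ≤ t₂ ≤ 1, t₂−t₁ ≤ δ, s ∉ (t₁,t₂]}`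
of the supOU kernel (with `sSup ∅ = 0`). -/
noncomputable def supOUOscillation {d : ℕ}
    (A : EuclideanSpace ℝ (Fin d) →L[ℝ] EuclideanSpace ℝ (Fin d)) (δ s : ℝ) : ℝ :=
  sSup {r : ℝ | ∃ t₁ t₂ : ℝ, 0 ≤ t₁ ∧ t₁ ≤ t₂ ∧ t₂ ≤ 1 ∧ t₂ - t₁ ≤ δ ∧
    s ∉ Set.Ioc t₁ t₂ ∧ r = ‖supOUKernel A (t₂ - s) - supOUKernel A (t₁ - s)‖}

/- The oscillation is bounded by `2κ(A) e^{ρ(A) min(s, 0)}` and vanishes for `s > 1`, so the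
`s`-integral of its `α`-th power is at most `(2κ)^α/(αρ)` over `s ≤ 0` plus `(2κ)^α` over
`0 < s ≤ 1`; integrating in `A` against `π` gives a multiple of `∫ κ^α/ρ dπ + ∫ κ^α dπ`. -/

theorem lintegral_Iic_zero_ofReal_exp_mul {c : ℝ} (hc : 0 < c) :
    ∫⁻ s in Iic 0, ENNReal.ofReal (Real.exp (c * s)) = ENNReal.ofReal (1 / c) := by
  rw [← ofReal_integral_eq_lintegral_ofReal (integrableOn_exp_mul_Iic hc 0)
    (ae_of_all _ fun _ => (Real.exp_pos _).le), integral_exp_mul_Iic hc, mul_zero, Real.exp_zero]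

section Oscillation

variable {d : ℕ} {A : EuclideanSpace ℝ (Fin d) →L[ℝ] EuclideanSpace ℝ (Fin d)}

theorem supOUKernel_of_neg {u : ℝ} (hu : u < 0) : supOUKernel A u = 0 :=
  if_neg (not_le.2 hu)

theorem supOUOscillation_nonneg (δ s : ℝ) : 0 ≤ supOUOscillation A δ s :=
  Real.sSup_nonneg (by rintro _ ⟨_, _, -, -, -, -, -, rfl⟩; exact norm_nonneg _)

theorem supOUOscillation_of_one_lt (δ : ℝ) {s : ℝ} (hs : 1 < s) :
    supOUOscillation A δ s = 0 := by
  refine le_antisymm (Real.sSup_le ?_ le_rfl) (supOUOscillation_nonneg δ s)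
  rintro _ ⟨t₁, t₂, -, ht₁₂, ht₂, -, -, rfl⟩
  rw [supOUKernel_of_neg (by linarith), supOUKernel_of_neg (by linarith), sub_zero, norm_zero]

variable {κA ρA : ℝ} (hκ : 0 ≤ κA) (hρ : 0 ≤ ρA)
  (hb : ∀ s : ℝ, 0 ≤ s → ‖NormedSpace.exp (s • A)‖ ≤ κA * Real.exp (-ρA * s))
include hκ hρ hb

theorem norm_supOUKernel_sub_le {t : ℝ} (ht : 0 ≤ t) (s : ℝ) :
    ‖supOUKernel A (t - s)‖ ≤ κA * Real.exp (ρA * min s 0) := by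
  rcases lt_or_ge (t - s) 0 with hts | hts
  · rw [supOUKernel_of_neg hts, norm_zero]
    positivity
  rw [supOUKernel, if_pos hts]
  refine (hb _ hts).trans (mul_le_mul_of_nonneg_left (Real.exp_le_exp.2 ?_) hκ)
  have : -(t - s) ≤ min s 0 := le_min (by linarith) (by linarith)
  nlinarith

theorem supOUOscillation_le (δ s : ℝ) :
    supOUOscillation A δ s ≤ 2 * κA * Real.exp (ρA * min s 0) := by
  refine Real.sSup_le ?_ (by positivity)
  rintro _ ⟨t₁, t₂, ht₁, ht₁₂, -, -, -, rfl⟩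
  calc ‖supOUKernel A (t₂ - s) - supOUKernel A (t₁ - s)‖
      ≤ ‖supOUKernel A (t₂ - s)‖ + ‖supOUKernel A (t₁ - s)‖ := norm_sub_le _ _
    _ ≤ κA * Real.exp (ρA * min s 0) + κA * Real.exp (ρA * min s 0) :=
        add_le_add (norm_supOUKernel_sub_le hκ hρ hb (ht₁.trans ht₁₂) s)
          (norm_supOUKernel_sub_le hκ hρ hb ht₁ s)
    _ = 2 * κA * Real.exp (ρA * min s 0) := by ring

theorem supOUOscillation_rpow_le {α : ℝ} (hα : 0 < α) (δ s : ℝ) :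
    supOUOscillation A δ s ^ α ≤ (2 * κA) ^ α * Real.exp (α * ρA * min s 0) :=
  calc supOUOscillation A δ s ^ α
      ≤ (2 * κA * Real.exp (ρA * min s 0)) ^ α :=
        Real.rpow_le_rpow (supOUOscillation_nonneg δ s) (supOUOscillation_le hκ hρ hb δ s) hα.le
    _ = (2 * κA) ^ α * Real.exp (α * ρA * min s 0) := by
        rw [Real.mul_rpow (by positivity) (Real.exp_nonneg _), ← Real.exp_mul]
        ring_nf

theorem ofReal_supOUOscillation_rpow_le_indicator {α : ℝ} (hα : 0 < α) (δ s : ℝ) :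
    ENNReal.ofReal (supOUOscillation A δ s ^ α) ≤
      (Iic 0).indicator (fun s => ENNReal.ofReal ((2 * κA) ^ α * Real.exp (α * ρA * s))) s
        + (Ioc 0 1).indicator (fun _ => ENNReal.ofReal ((2 * κA) ^ α)) s := by
  have hosc := supOUOscillation_rpow_le hκ hρ hb hα δ s
  rcases le_or_gt s 0 with hs₀ | hs₀
  · rw [indicator_of_mem (mem_Iic.2 hs₀), indicator_of_notMem (fun h => hs₀.not_gt h.1),
      add_zero]
    rw [min_eq_left hs₀] at hosc
    exact ENNReal.ofReal_le_ofReal hosc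
  rcases le_or_gt s 1 with hs₁ | hs₁
  · rw [indicator_of_notMem (notMem_Iic.2 hs₀), indicator_of_mem (mem_Ioc.2 ⟨hs₀, hs₁⟩), zero_add]
    rw [min_eq_right hs₀.le, mul_zero, Real.exp_zero, mul_one] at hosc
    exact ENNReal.ofReal_le_ofReal hosc
  rw [supOUOscillation_of_one_lt δ hs₁, Real.zero_rpow hα.ne', ENNReal.ofReal_zero]
  exact zero_le

end Oscillation

theorem lintegral_supOUOscillation_rpow_le {d : ℕ}
    {A : EuclideanSpace ℝ (Fin d) →L[ℝ] EuclideanSpace ℝ (Fin d)} {κA ρA : ℝ}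
    (hκ : 0 ≤ κA) (hρ : 0 < ρA)
    (hb : ∀ s : ℝ, 0 ≤ s → ‖NormedSpace.exp (s • A)‖ ≤ κA * Real.exp (-ρA * s))
    {α : ℝ} (hα : 0 < α) (δ : ℝ) :
    ∫⁻ s, ENNReal.ofReal (supOUOscillation A δ s ^ α) ≤
      ENNReal.ofReal (2 ^ α / α) * ENNReal.ofReal (κA ^ α / ρA)
        + ENNReal.ofReal (2 ^ α) * ENNReal.ofReal (κA ^ α) := by
  have hC : 0 ≤ (2 * κA) ^ α := by positivity
  have hmeas : Measurable ((Iic (0 : ℝ)).indicator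
      fun s => ENNReal.ofReal ((2 * κA) ^ α * Real.exp (α * ρA * s))) :=
    (by fun_prop : Measurable _).indicator measurableSet_Iic
  calc ∫⁻ s, ENNReal.ofReal (supOUOscillation A δ s ^ α)
      ≤ ∫⁻ s, (Iic 0).indicator
            (fun s => ENNReal.ofReal ((2 * κA) ^ α * Real.exp (α * ρA * s))) s
          + (Ioc 0 1).indicator (fun _ => ENNReal.ofReal ((2 * κA) ^ α)) s :=
        lintegral_mono (ofReal_supOUOscillation_rpow_le_indicator hκ hρ.le hb hα δ)
    _ = ENNReal.ofReal ((2 * κA) ^ α) * ENNReal.ofReal (1 / (α * ρA))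
          + ENNReal.ofReal ((2 * κA) ^ α) * volume (Ioc (0 : ℝ) 1) := by
        rw [lintegral_add_left hmeas, lintegral_indicator measurableSet_Iic,
          lintegral_indicator_const measurableSet_Ioc]
        simp_rw [ENNReal.ofReal_mul hC]
        rw [lintegral_const_mul' _ _ ENNReal.ofReal_ne_top,
          lintegral_Iic_zero_ofReal_exp_mul (by positivity)]
    _ = ENNReal.ofReal (2 ^ α / α) * ENNReal.ofReal (κA ^ α / ρA)
          + ENNReal.ofReal (2 ^ α) * ENNReal.ofReal (κA ^ α) := by
        rw [Real.volume_Ioc, sub_zero, ENNReal.ofReal_one, mul_one, ← ENNReal.ofReal_mul hC,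
          ← ENNReal.ofReal_mul (by positivity), ← ENNReal.ofReal_mul (by positivity),
          Real.mul_rpow zero_le_two hκ, div_mul_div_comm, mul_one_div]

theorem supOUOscillation_mem_Lalpha_general
    {d : ℕ}
    [MeasurableSpace (EuclideanSpace ℝ (Fin d) →L[ℝ] EuclideanSpace ℝ (Fin d))]
    (π : Measure (EuclideanSpace ℝ (Fin d) →L[ℝ] EuclideanSpace ℝ (Fin d)))
    (κ ρ : (EuclideanSpace ℝ (Fin d) →L[ℝ] EuclideanSpace ℝ (Fin d)) → ℝ)
    (hκ_meas : Measurable κ) (hρ_meas : Measurable ρ)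
    (hκ1 : ∀ A, 1 ≤ κ A) (hρ0 : ∀ A, 0 < ρ A)
    (hbound : ∀ᵐ A ∂π, ∀ s : ℝ, 0 ≤ s →
      ‖NormedSpace.exp (s • A)‖ ≤ κ A * Real.exp (-ρ A * s))
    (α : ℝ) (hα : 0 < α)
    (hint1 : ∫⁻ A, ENNReal.ofReal (κ A ^ α / ρ A) ∂π < ⊤)
    (hint2 : ∫⁻ A, ENNReal.ofReal (κ A ^ α) ∂π < ⊤) :
    ∀ δ : ℝ, δ ∈ Set.Ioo (0:ℝ) 1 →
      ∫⁻ A, (∫⁻ s, ENNReal.ofReal (supOUOscillation A δ s ^ α)) ∂π < ⊤ := by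
  intro δ _
  have hpointwise : ∀ᵐ A ∂π, ∫⁻ s, ENNReal.ofReal (supOUOscillation A δ s ^ α) ≤
      ENNReal.ofReal (2 ^ α / α) * ENNReal.ofReal (κ A ^ α / ρ A)
        + ENNReal.ofReal (2 ^ α) * ENNReal.ofReal (κ A ^ α) := by
    filter_upwards [hbound] with A hA
    exact lintegral_supOUOscillation_rpow_le (zero_le_one.trans (hκ1 A)) (hρ0 A) hA hα δ
  have hmeas : Measurable fun A => ENNReal.ofReal (κ A ^ α / ρ A) := by fun_prop
  calc ∫⁻ A, (∫⁻ s, ENNReal.ofReal (supOUOscillation A δ s ^ α)) ∂π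
      ≤ ∫⁻ A, ENNReal.ofReal (2 ^ α / α) * ENNReal.ofReal (κ A ^ α / ρ A)
          + ENNReal.ofReal (2 ^ α) * ENNReal.ofReal (κ A ^ α) ∂π := lintegral_mono_ae hpointwise
    _ = ENNReal.ofReal (2 ^ α / α) * ∫⁻ A, ENNReal.ofReal (κ A ^ α / ρ A) ∂π
          + ENNReal.ofReal (2 ^ α) * ∫⁻ A, ENNReal.ofReal (κ A ^ α) ∂π := by
        rw [lintegral_add_left (hmeas.const_mul _), lintegral_const_mul' _ _ ENNReal.ofReal_ne_top,
          lintegral_const_mul' _ _ ENNReal.ofReal_ne_top]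
    _ < ⊤ := ENNReal.add_lt_top.2
        ⟨ENNReal.mul_lt_top ENNReal.ofReal_lt_top hint1,
          ENNReal.mul_lt_top ENNReal.ofReal_lt_top hint2⟩

/-- Proposition 5.3: under the exponential bound `‖e^{As}‖ ≤ κ(A)e^{−ρ(A)s}`
(π-a.s., for all `s ≥ 0`) and the integrability conditions `∫ κ^α/ρ dπ < ∞`,
`∫ κ^α dπ < ∞`, the oscillation `f_δ` of the supOU kernel satisfies
`∫_M ∫_ℝ f_δ(A,s)^α ds π(dA) < ∞` for every `δ ∈ (0,1)`. -/
theorem supOUOscillation_mem_Lalpha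
    {d : ℕ}
    [MeasurableSpace (EuclideanSpace ℝ (Fin d) →L[ℝ] EuclideanSpace ℝ (Fin d))]
    [BorelSpace (EuclideanSpace ℝ (Fin d) →L[ℝ] EuclideanSpace ℝ (Fin d))]
    (π : Measure (EuclideanSpace ℝ (Fin d) →L[ℝ] EuclideanSpace ℝ (Fin d)))
    [IsProbabilityMeasure π]
    (κ ρ : (EuclideanSpace ℝ (Fin d) →L[ℝ] EuclideanSpace ℝ (Fin d)) → ℝ)
    (hκ_meas : Measurable κ) (hρ_meas : Measurable ρ)
    (hκ1 : ∀ A, 1 ≤ κ A) (hρ0 : ∀ A, 0 < ρ A)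
    (hbound : ∀ᵐ A ∂π, ∀ s : ℝ, 0 ≤ s →
      ‖NormedSpace.exp (s • A)‖ ≤ κ A * Real.exp (-ρ A * s))
    (α : ℝ) (hα : 0 < α)
    (hint1 : ∫⁻ A, ENNReal.ofReal (κ A ^ α / ρ A) ∂π < ⊤)
    (hint2 : ∫⁻ A, ENNReal.ofReal (κ A ^ α) ∂π < ⊤) :
    ∀ δ : ℝ, δ ∈ Set.Ioo (0:ℝ) 1 →
      ∫⁻ A, (∫⁻ s, ENNReal.ofReal (supOUOscillation A δ s ^ α)) ∂π < ⊤ :=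
  supOUOscillation_mem_Lalpha_general π κ ρ hκ_meas hρ_meas hκ1 hρ0 hbound α hα hint1 hint2
end
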